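/- Define the 4n×4n block unitaries R (4×4 block permutation with blocks S_n, S_n, S_n^{-1}, S_n^{-1} as in the p4 construction) and T (block matrix with blocks Ω_n, Ω_n, Ω_n^{-1}, Ω_n^{-1}). Then R⁴ = T² = 1_{4n} and (RT)⁴ = ω̄_n² · 1_{4n}. -/
import Mathlib


open Complex Matrix

/-- `ω_n = exp(2πi/n)`. -/
noncomputable def omg (n : ℕ) : ℂ := Complex.exp (2 * Real.pi * Complex.I / n)

/-- The `n×n` cyclic shift matrix `S_n`, with `S_n e_k = e_{k+1}` (indices mod `n`). -/
def Vshift (n : ℕ) : Matrix (Fin n) (Fin n) ℂ :=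
  Matrix.of fun i j => if (i : ℕ) = ((j : ℕ) + 1) % n then 1 else 0

/-- The diagonal matrix `Ω_n = diag(ω_n, ω_n^2, …, ω_n^n)`. -/
noncomputable def VOmega (n : ℕ) : Matrix (Fin n) (Fin n) ℂ :=
  Matrix.diagonal fun k => omg n ^ ((k : ℕ) + 1)

/-- Assemble a `4×4` array of `n×n` blocks into a `4n×4n` matrix. -/
def blk4 {n : ℕ} (f : Fin 4 → Fin 4 → Matrix (Fin n) (Fin n) ℂ) :
    Matrix (Fin 4 × Fin n) (Fin 4 × Fin n) ℂ :=
  Matrix.of fun p q => f p.1 q.1 p.2 q.2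

/-- `R` with block rows `(0,0,0,S_n)`, `(S_n,0,0,0)`, `(0,S_n⁻¹,0,0)`, `(0,0,S_n⁻¹,0)`. -/
noncomputable def Rp4 (n : ℕ) : Matrix (Fin 4 × Fin n) (Fin 4 × Fin n) ℂ :=
  blk4 ![![0, 0, 0, Vshift n], ![Vshift n, 0, 0, 0],
         ![0, (Vshift n)⁻¹, 0, 0], ![0, 0, (Vshift n)⁻¹, 0]]

/-- `T` with block rows `(0,0,Ω_n,0)`, `(0,0,0,Ω_n)`, `(Ω_n⁻¹,0,0,0)`, `(0,Ω_n⁻¹,0,0)`. -/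
noncomputable def Tp4 (n : ℕ) : Matrix (Fin 4 × Fin n) (Fin 4 × Fin n) ℂ :=
  blk4 ![![0, 0, VOmega n, 0], ![0, 0, 0, VOmega n],
         ![(VOmega n)⁻¹, 0, 0, 0], ![0, (VOmega n)⁻¹, 0, 0]]

set_option linter.unusedSectionVars false

section Aux
variable (n : ℕ) [NeZero n]

lemma omg_pow_n : omg n ^ n = 1 := by
  have hne : (n:ℂ) ≠ 0 := Nat.cast_ne_zero.mpr (NeZero.ne n)
  rw [omg, ← Complex.exp_nat_mul, mul_div_cancel₀ _ hne]
  exact Complex.exp_two_pi_mul_I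

lemma conj_omg : (starRingEnd ℂ) (omg n) = Complex.exp (-(2 * Real.pi * Complex.I / n)) := by
  rw [omg, ← Complex.exp_conj]
  congr 1
  simp [map_div₀, Complex.conj_I, map_ofNat]
  ring

lemma omg_mul_conj : omg n * (starRingEnd ℂ) (omg n) = 1 := by
  rw [conj_omg, omg, ← Complex.exp_add, add_neg_cancel, Complex.exp_zero]

lemma omg_pow_mod (a : ℕ) : omg n ^ (a % n) = omg n ^ a := by
  conv_rhs => rw [← Nat.div_add_mod a n]
  rw [pow_add, pow_mul, omg_pow_n, one_pow, one_mul]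

lemma fin_add_one_val (j : Fin n) : ((j + 1 : Fin n) : ℕ) = ((j : ℕ) + 1) % n := by
  rw [Fin.add_def, Fin.val_one']
  show ((j:ℕ) + 1 % n) % n = _
  conv_lhs => rw [Nat.add_mod, Nat.mod_mod_of_dvd _ dvd_rfl, ← Nat.add_mod]

variable {n}

lemma Vshift_apply (i j : Fin n) : Vshift n i j = if i = j + 1 then 1 else 0 := by
  simp only [Vshift, Matrix.of_apply, Fin.ext_iff, fin_add_one_val]

lemma Vshift_apply' (i j : Fin n) : Vshift n i j = if j = i - 1 then 1 else 0 := by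
  rw [Vshift_apply]
  congr 1
  refine propext ⟨?_, ?_⟩
  · rintro rfl; exact (add_sub_cancel_right j 1).symm
  · rintro rfl; exact (sub_add_cancel i 1).symm

lemma shift_mul (M : Matrix (Fin n) (Fin n) ℂ) :
    Vshift n * M = Matrix.of fun i j => M (i - 1) j := by
  ext i j
  simp [Matrix.mul_apply, Vshift_apply']

lemma mul_shift (M : Matrix (Fin n) (Fin n) ℂ) :
    M * Vshift n = Matrix.of fun i j => M i (j + 1) := by
  ext i j
  simp [Matrix.mul_apply, Vshift_apply]

lemma shiftT_mul (M : Matrix (Fin n) (Fin n) ℂ) :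
    (Vshift n)ᵀ * M = Matrix.of fun i j => M (i + 1) j := by
  ext i j
  simp [Matrix.mul_apply, Vshift_apply]

lemma mul_shiftT (M : Matrix (Fin n) (Fin n) ℂ) :
    M * (Vshift n)ᵀ = Matrix.of fun i j => M i (j - 1) := by
  ext i j
  simp [Matrix.mul_apply, Vshift_apply']

lemma SSt : Vshift n * (Vshift n)ᵀ = 1 := by
  rw [mul_shiftT]
  ext i j
  simp [Vshift_apply, Matrix.one_apply, sub_eq_iff_eq_add, eq_comm]

lemma StS : (Vshift n)ᵀ * Vshift n = 1 := by
  rw [shiftT_mul]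
  ext i j
  simp [Vshift_apply', Matrix.one_apply, sub_eq_iff_eq_add, add_comm, eq_comm]

lemma starS : star (Vshift n) = (Vshift n)ᵀ := by
  ext i j
  simp [Vshift, Matrix.conjTranspose_apply, Matrix.transpose_apply, apply_ite (starRingEnd ℂ)]

lemma starSt : star ((Vshift n)ᵀ) = Vshift n := by
  ext i j
  simp [Vshift, Matrix.conjTranspose_apply, Matrix.transpose_apply, apply_ite (starRingEnd ℂ)]

lemma starO : star (VOmega n) =
    Matrix.diagonal fun k : Fin n => (starRingEnd ℂ) (omg n ^ ((k:ℕ)+1)) := by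
  rw [Matrix.star_eq_conjTranspose, VOmega, Matrix.diagonal_conjTranspose]
  rfl

lemma OOs : VOmega n * star (VOmega n) = 1 := by
  rw [starO, VOmega, Matrix.diagonal_mul_diagonal]
  ext i j
  simp [Matrix.diagonal_apply, Matrix.one_apply, map_pow, ← mul_pow, omg_mul_conj]

lemma OsO : star (VOmega n) * VOmega n = 1 := by
  rw [starO, VOmega, Matrix.diagonal_mul_diagonal]
  ext i j
  simp [Matrix.diagonal_apply, Matrix.one_apply, map_pow, ← mul_pow, mul_comm,
    omg_mul_conj]

lemma diag_mul_shift (d : Fin n → ℂ) (b : ℂ) (h : ∀ k, d (k+1) = b * d k) :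
    Matrix.diagonal d * Vshift n = b • (Vshift n * Matrix.diagonal d) := by
  ext i j
  simp only [Matrix.diagonal_mul, Matrix.smul_apply, Matrix.mul_diagonal, Vshift_apply,
    smul_eq_mul, ite_mul, mul_ite, mul_zero, zero_mul, mul_one, one_mul]
  split_ifs with hc
  · subst hc; exact h j
  · ring

lemma diag_mul_shiftT (d : Fin n → ℂ) (a : ℂ) (h : ∀ k, d k = a * d (k+1)) :
    Matrix.diagonal d * (Vshift n)ᵀ = a • ((Vshift n)ᵀ * Matrix.diagonal d) := by
  ext i j
  simp only [Matrix.diagonal_mul, Matrix.smul_apply, Matrix.mul_diagonal, Vshift_apply,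
    Matrix.transpose_apply, smul_eq_mul, ite_mul, mul_ite, mul_zero, zero_mul, mul_one, one_mul]
  split_ifs with hc
  · subst hc; exact h i
  · ring

lemma omg_d_succ (k : Fin n) : omg n ^ (((k+1 : Fin n):ℕ)+1) = omg n * omg n ^ ((k:ℕ)+1) := by
  rw [fin_add_one_val, pow_succ, omg_pow_mod]
  ring

lemma OS : VOmega n * Vshift n = omg n • (Vshift n * VOmega n) := by
  refine diag_mul_shift _ _ fun k => ?_
  rw [omg_d_succ]

lemma OSt : VOmega n * (Vshift n)ᵀ =
    (starRingEnd ℂ) (omg n) • ((Vshift n)ᵀ * VOmega n) := by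
  refine diag_mul_shiftT _ _ fun k => ?_
  rw [omg_d_succ]
  have := omg_mul_conj n
  linear_combination (-(omg n ^ ((k:ℕ)+1))) * this

lemma OsS : star (VOmega n) * Vshift n =
    (starRingEnd ℂ) (omg n) • (Vshift n * star (VOmega n)) := by
  rw [starO]
  refine diag_mul_shift _ _ fun k => ?_
  rw [omg_d_succ, _root_.map_mul]

lemma OsSt : star (VOmega n) * (Vshift n)ᵀ = omg n • ((Vshift n)ᵀ * star (VOmega n)) := by
  rw [starO]
  refine diag_mul_shiftT _ _ fun k => ?_
  rw [omg_d_succ, _root_.map_mul]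
  have := omg_mul_conj n
  linear_combination (-((starRingEnd ℂ) (omg n ^ ((k:ℕ)+1)))) * this

-- block machinery

lemma blk4_mul (f g : Fin 4 → Fin 4 → Matrix (Fin n) (Fin n) ℂ) :
    blk4 f * blk4 g = blk4 fun i j => ∑ k, f i k * g k j := by
  ext p q
  simp only [blk4, Matrix.mul_apply, Matrix.of_apply, Fintype.sum_prod_type, Matrix.sum_apply]

lemma blk4_congr {f g : Fin 4 → Fin 4 → Matrix (Fin n) (Fin n) ℂ}
    (h : ∀ i j, f i j = g i j) : blk4 f = blk4 g := by
  ext ⟨a, x⟩ ⟨b, y⟩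
  simp [blk4, h]

lemma blk4_star (f : Fin 4 → Fin 4 → Matrix (Fin n) (Fin n) ℂ) :
    star (blk4 f) = blk4 fun i j => star (f j i) := by
  ext ⟨a, x⟩ ⟨b, y⟩
  simp [blk4, Matrix.star_apply]

lemma one_eq_blk4 :
    (1 : Matrix (Fin 4 × Fin n) (Fin 4 × Fin n) ℂ) =
      blk4 fun i j => if i = j then 1 else 0 := by
  ext ⟨a, x⟩ ⟨b, y⟩
  simp only [blk4, Matrix.of_apply, Matrix.one_apply, Prod.mk.injEq]
  by_cases h : a = b <;> by_cases h2 : x = y <;> simp [h, h2, Matrix.one_apply]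

lemma smul_one_eq_blk4 (z : ℂ) :
    z • (1 : Matrix (Fin 4 × Fin n) (Fin 4 × Fin n) ℂ) =
      blk4 fun i j => if i = j then z • 1 else 0 := by
  ext ⟨a, x⟩ ⟨b, y⟩
  simp only [blk4, Matrix.of_apply, Matrix.smul_apply, Matrix.one_apply, Prod.mk.injEq]
  by_cases h : a = b <;> by_cases h2 : x = y <;>
    simp [h, h2, Matrix.one_apply, Matrix.smul_apply]

-- rewriting helpers

lemma ap_comm {X Y : Matrix (Fin n) (Fin n) ℂ} {s : ℂ} (h : X * Y = s • (Y * X))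
    (Z : Matrix (Fin n) (Fin n) ℂ) : X * (Y * Z) = s • (Y * (X * Z)) := by
  rw [← mul_assoc, h, smul_mul_assoc, mul_assoc]

lemma ap_one {X Y : Matrix (Fin n) (Fin n) ℂ} (h : X * Y = 1)
    (Z : Matrix (Fin n) (Fin n) ℂ) : X * (Y * Z) = Z := by
  rw [← mul_assoc, h, one_mul]

-- the four diagonal words

lemma word1 :
    ((Vshift n * star (VOmega n)) * (Vshift n * VOmega n)) *
      (((Vshift n)ᵀ * VOmega n) * ((Vshift n)ᵀ * star (VOmega n))) =
      ((starRingEnd ℂ) (omg n))^2 • 1 := by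
  simp only [mul_assoc]
  simp only [ap_one SSt, ap_one StS, ap_one OOs, ap_one OsO,
    ap_comm (OSt (n := n)), ap_comm (OsS (n := n)), ap_comm (OsSt (n := n)), ap_comm (OS (n := n)),
    SSt, StS, OOs, OsO, OSt, OsS, OsSt, OS,
    mul_smul_comm, smul_smul, mul_one]
  match_scalars <;>
    first
      | ring1
      | linear_combination ((starRingEnd ℂ) (omg n))^2 * omg_mul_conj n
      | linear_combination (-((starRingEnd ℂ) (omg n))^2) * omg_mul_conj n
      | linear_combination ((starRingEnd ℂ) (omg n))^3 * omg_mul_conj n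
      | linear_combination (-((starRingEnd ℂ) (omg n))^3) * omg_mul_conj n

lemma word2 :
    ((Vshift n * VOmega n) * ((Vshift n)ᵀ * VOmega n)) *
      ((((Vshift n)ᵀ * star (VOmega n))) * (Vshift n * star (VOmega n))) =
      ((starRingEnd ℂ) (omg n))^2 • 1 := by
  simp only [mul_assoc]
  simp only [ap_one SSt, ap_one StS, ap_one OOs, ap_one OsO,
    ap_comm (OSt (n := n)), ap_comm (OsS (n := n)), ap_comm (OsSt (n := n)), ap_comm (OS (n := n)),
    SSt, StS, OOs, OsO, OSt, OsS, OsSt, OS,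
    mul_smul_comm, smul_smul, mul_one]
  match_scalars <;>
    first
      | ring1
      | linear_combination ((starRingEnd ℂ) (omg n))^2 * omg_mul_conj n
      | linear_combination (-((starRingEnd ℂ) (omg n))^2) * omg_mul_conj n
      | linear_combination ((starRingEnd ℂ) (omg n))^3 * omg_mul_conj n
      | linear_combination (-((starRingEnd ℂ) (omg n))^3) * omg_mul_conj n

lemma word3 :
    ((((Vshift n)ᵀ * VOmega n)) * ((Vshift n)ᵀ * star (VOmega n))) *
      ((Vshift n * star (VOmega n)) * (Vshift n * VOmega n)) =
      ((starRingEnd ℂ) (omg n))^2 • 1 := by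
  simp only [mul_assoc]
  simp only [ap_one SSt, ap_one StS, ap_one OOs, ap_one OsO,
    ap_comm (OSt (n := n)), ap_comm (OsS (n := n)), ap_comm (OsSt (n := n)), ap_comm (OS (n := n)),
    SSt, StS, OOs, OsO, OSt, OsS, OsSt, OS,
    mul_smul_comm, smul_smul, mul_one]
  match_scalars <;>
    first
      | ring1
      | linear_combination ((starRingEnd ℂ) (omg n))^2 * omg_mul_conj n
      | linear_combination (-((starRingEnd ℂ) (omg n))^2) * omg_mul_conj n
      | linear_combination ((starRingEnd ℂ) (omg n))^3 * omg_mul_conj n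
      | linear_combination (-((starRingEnd ℂ) (omg n))^3) * omg_mul_conj n

lemma word4 :
    ((((Vshift n)ᵀ * star (VOmega n))) * (Vshift n * star (VOmega n))) *
      ((Vshift n * VOmega n) * ((Vshift n)ᵀ * VOmega n)) =
      ((starRingEnd ℂ) (omg n))^2 • 1 := by
  simp only [mul_assoc]
  simp only [ap_one SSt, ap_one StS, ap_one OOs, ap_one OsO,
    ap_comm (OSt (n := n)), ap_comm (OsS (n := n)), ap_comm (OsSt (n := n)), ap_comm (OS (n := n)),
    SSt, StS, OOs, OsO, OSt, OsS, OsSt, OS,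
    mul_smul_comm, smul_smul, mul_one]
  match_scalars <;>
    first
      | ring1
      | linear_combination ((starRingEnd ℂ) (omg n))^2 * omg_mul_conj n
      | linear_combination (-((starRingEnd ℂ) (omg n))^2) * omg_mul_conj n
      | linear_combination ((starRingEnd ℂ) (omg n))^3 * omg_mul_conj n
      | linear_combination (-((starRingEnd ℂ) (omg n))^3) * omg_mul_conj n

end Aux

section Blocks
variable {n : ℕ} [NeZero n]

lemma S2St2 : (Vshift n * Vshift n) * ((Vshift n)ᵀ * (Vshift n)ᵀ) = 1 := by
  simp only [mul_assoc]
  simp only [ap_one SSt, ap_one StS, SSt, StS]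

lemma St2S2 : ((Vshift n)ᵀ * (Vshift n)ᵀ) * (Vshift n * Vshift n) = 1 := by
  simp only [mul_assoc]
  simp only [ap_one SSt, ap_one StS, SSt, StS]

lemma hRblk : Rp4 n = blk4 ![![0, 0, 0, Vshift n], ![Vshift n, 0, 0, 0],
    ![0, (Vshift n)ᵀ, 0, 0], ![0, 0, (Vshift n)ᵀ, 0]] := by
  rw [Rp4, Matrix.inv_eq_right_inv SSt]

lemma hTblk : Tp4 n = blk4 ![![0, 0, VOmega n, 0], ![0, 0, 0, VOmega n],
    ![star (VOmega n), 0, 0, 0], ![0, star (VOmega n), 0, 0]] := by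
  rw [Tp4, Matrix.inv_eq_right_inv OOs]

lemma hRR : Rp4 n * Rp4 n = blk4 ![![0, 0, 1, 0], ![0, 0, 0, Vshift n * Vshift n],
    ![1, 0, 0, 0], ![0, (Vshift n)ᵀ * (Vshift n)ᵀ, 0, 0]] := by
  rw [hRblk, blk4_mul]
  refine blk4_congr fun i j => ?_
  fin_cases i <;> fin_cases j <;>
    simp [Fin.sum_univ_four, Matrix.vecHead, Matrix.vecTail, Function.comp, SSt, StS]

lemma hR4 : Rp4 n ^ 4 = 1 := by
  have h : Rp4 n ^ 4 = (Rp4 n * Rp4 n) * (Rp4 n * Rp4 n) := by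
    rw [pow_succ, pow_succ, pow_succ, pow_one, mul_assoc]
  rw [h, hRR, blk4_mul, one_eq_blk4]
  refine blk4_congr fun i j => ?_
  fin_cases i <;> fin_cases j <;>
    simp [Fin.sum_univ_four, Matrix.vecHead, Matrix.vecTail, Function.comp, S2St2, St2S2]

lemma hT2 : Tp4 n ^ 2 = 1 := by
  rw [pow_two, hTblk, blk4_mul, one_eq_blk4]
  refine blk4_congr fun i j => ?_
  fin_cases i <;> fin_cases j <;>
    simp [Fin.sum_univ_four, Matrix.vecHead, Matrix.vecTail, Function.comp, OOs, OsO]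

lemma hRu : Rp4 n * star (Rp4 n) = 1 := by
  rw [hRblk, blk4_star, blk4_mul, one_eq_blk4]
  refine blk4_congr fun i j => ?_
  fin_cases i <;> fin_cases j <;>
    simp [Fin.sum_univ_four, Matrix.vecHead, Matrix.vecTail, Function.comp, starS, starSt, SSt, StS]

lemma hTu : Tp4 n * star (Tp4 n) = 1 := by
  rw [hTblk, blk4_star, blk4_mul, one_eq_blk4]
  refine blk4_congr fun i j => ?_
  fin_cases i <;> fin_cases j <;>
    simp [Fin.sum_univ_four, Matrix.vecHead, Matrix.vecTail, Function.comp, star_star, OOs, OsO]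

lemma hRT : Rp4 n * Tp4 n = blk4
    ![![0, Vshift n * star (VOmega n), 0, 0],
      ![0, 0, Vshift n * VOmega n, 0],
      ![0, 0, 0, (Vshift n)ᵀ * VOmega n],
      ![(Vshift n)ᵀ * star (VOmega n), 0, 0, 0]] := by
  rw [hRblk, hTblk, blk4_mul]
  refine blk4_congr fun i j => ?_
  fin_cases i <;> fin_cases j <;>
    simp [Fin.sum_univ_four, Matrix.vecHead, Matrix.vecTail, Function.comp]

lemma hRT2 : (Rp4 n * Tp4 n) * (Rp4 n * Tp4 n) = blk4
    ![![0, 0, (Vshift n * star (VOmega n)) * (Vshift n * VOmega n), 0],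
      ![0, 0, 0, (Vshift n * VOmega n) * ((Vshift n)ᵀ * VOmega n)],
      ![((Vshift n)ᵀ * VOmega n) * ((Vshift n)ᵀ * star (VOmega n)), 0, 0, 0],
      ![0, ((Vshift n)ᵀ * star (VOmega n)) * (Vshift n * star (VOmega n)), 0, 0]] := by
  rw [hRT, blk4_mul]
  refine blk4_congr fun i j => ?_
  fin_cases i <;> fin_cases j <;>
    simp [Fin.sum_univ_four, Matrix.vecHead, Matrix.vecTail, Function.comp]

lemma hRT4 : (Rp4 n * Tp4 n) ^ 4 =
    ((starRingEnd ℂ) (omg n)) ^ 2 • (1 : Matrix (Fin 4 × Fin n) (Fin 4 × Fin n) ℂ) := by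
  have h : (Rp4 n * Tp4 n) ^ 4 =
      ((Rp4 n * Tp4 n) * (Rp4 n * Tp4 n)) * ((Rp4 n * Tp4 n) * (Rp4 n * Tp4 n)) := by
    rw [pow_succ, pow_succ, pow_succ, pow_one, mul_assoc]
  rw [h, hRT2, blk4_mul, smul_one_eq_blk4]
  refine blk4_congr fun i j => ?_
  fin_cases i <;> fin_cases j <;>
    simp [Fin.sum_univ_four, Matrix.vecHead, Matrix.vecTail, Function.comp, word1, word2, word3, word4]

end Blocks

/-- The `4n×4n` block matrices `R, T` are unitary, `R⁴ = T² = 1`,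
and `(RT)⁴ = ω̄_n² • 1`. -/
theorem stmt12 (n : ℕ) (hn : 1 ≤ n) :
    Rp4 n ∈ Matrix.unitaryGroup (Fin 4 × Fin n) ℂ ∧
    Tp4 n ∈ Matrix.unitaryGroup (Fin 4 × Fin n) ℂ ∧
    Rp4 n ^ 4 = 1 ∧ Tp4 n ^ 2 = 1 ∧
    (Rp4 n * Tp4 n) ^ 4 =
      ((starRingEnd ℂ) (omg n)) ^ 2 • (1 : Matrix (Fin 4 × Fin n) (Fin 4 × Fin n) ℂ) := by
  have : NeZero n := ⟨by omega⟩
  exact ⟨Matrix.mem_unitaryGroup_iff.mpr hRu, Matrix.mem_unitaryGroup_iff.mpr hTu,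
    hR4, hT2, hRT4⟩
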